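/- (Dedekind–Rademacher reciprocity) Let ν₀, ν₁, ν₂ be pairwise coprime positive integers. Then S(ν₁,ν₂|ν₀) + S(ν₀,ν₂|ν₁) + S(ν₁,ν₀|ν₂) = (ν₀² + ν₁² + ν₂²)/(12 ν₀ ν₁ ν₂) − 1/4, where S(a,b|c) := Σ_{i=1}^{c−1} b₁(ia/c) b₁(ib/c) and b₁(x) = {x} − 1/2. -/

import Mathlib

noncomputable def b1 (x : ℝ) : ℝ := Int.fract x - 1/2

noncomputable def dedekindS (a b c : ℕ) : ℝ :=
  ∑ i ∈ Finset.Ico 1 c, b1 (i * a / c) * b1 (i * b / c)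

/-!
Write `b₁(ib/a) = (ib mod a)/a - 1/2`; since `i ↦ ib mod a` permutes the residues mod `a`, the
linear terms sum to a constant, and substituting `ib mod a = ib - a⌊ib/a⌋` turns `a² S(b,c|a)`
into a polynomial in `a, b, c` plus `a² Σ ⌊ib/a⌋⌊ic/a⌋ - ab Σ i⌊ic/a⌋ - ac Σ i⌊ib/a⌋`, summed
over `1 ≤ i < a`.

A product of floors counts the lattice points `(i, j, k)` of the box `[1,a) × [1,b) × [1,c)` at
which `i/a` is the largest of `i/a, j/b, k/c`. Pairwise coprimality rules out ties, so the three
such sums add up to `(a-1)(b-1)(c-1)`.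

The weighted sums pair up as `b Σ i⌊ib/a⌋ + a Σ j⌊ja/b⌋ = Σ max(ib, ja)`. Since
`ab - max(ib, ja)` is the number of `u < ab` with `u ≥ ib` and `u ≥ ja`, this equals
`ab(a-1)(b-1) - Σ_{u<ab} ⌊u/a⌋⌊u/b⌋`. The last sum is evaluated with the Chinese remainder
theorem: `(u mod a, u mod b)` runs over all pairs of residues.
-/

open Finset

lemma sum_range_natCast (n : ℕ) : ∑ i ∈ range n, (i : ℝ) = n * (n - 1) / 2 := by
  induction n with
  | zero => simp
  | succ n ih => rw [sum_range_succ, ih]; push_cast; ring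

lemma sum_range_natCast_sq (n : ℕ) :
    ∑ i ∈ range n, (i : ℝ) ^ 2 = n * (n - 1) * (2 * n - 1) / 6 := by
  induction n with
  | zero => simp
  | succ n ih => rw [sum_range_succ, ih]; push_cast; ring

lemma sum_Ico_one_eq_sum_range {M : Type*} [AddCommMonoid M] {f : ℕ → M} (hf : f 0 = 0)
    (n : ℕ) : ∑ i ∈ Ico 1 n, f i = ∑ i ∈ range n, f i := by
  rcases n.eq_zero_or_pos with rfl | hn
  · simp
  · rw [sum_range_eq_add_Ico _ hn, hf, zero_add]

lemma sum_range_mul_eq_sum_sum {M : Type*} [AddCommMonoid M] (m n : ℕ) (g : ℕ → M) :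
    ∑ u ∈ range (m * n), g u = ∑ q ∈ range m, ∑ r ∈ range n, g (r + n * q) := by
  simp only [sum_range, ← finProdFinEquiv.sum_comp, Fintype.sum_prod_type,
    finProdFinEquiv_apply_val]

lemma sum_range_eq_sum_zmod {M : Type*} [AddCommMonoid M] (n : ℕ) [NeZero n] (f : ℕ → M) :
    ∑ u ∈ range n, f u = ∑ x : ZMod n, f x.val := by
  obtain ⟨k, rfl⟩ : ∃ k, n = k + 1 := Nat.exists_eq_succ_of_ne_zero (NeZero.ne n)
  exact (Fin.sum_univ_eq_sum_range _ _).symm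

lemma sum_range_mul_mod_mod {M : Type*} [AddCommMonoid M] {a b : ℕ} (hab : a.Coprime b)
    [NeZero a] [NeZero b] (g : ℕ → ℕ → M) :
    ∑ u ∈ range (a * b), g (u % a) (u % b) = ∑ r ∈ range a, ∑ s ∈ range b, g r s := by
  simp only [sum_range_eq_sum_zmod, ← Fintype.sum_prod_type']
  rw [← (ZMod.chineseRemainder hab).toEquiv.sum_comp]
  refine Fintype.sum_congr _ _ fun x => ?_
  obtain ⟨k, rfl⟩ : ∃ k : ℕ, (k : ZMod (a * b)) = x := ⟨x.val, ZMod.natCast_zmod_val x⟩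
  simp [ZMod.val_natCast]

lemma sum_range_comp_mul_mod {M : Type*} [AddCommMonoid M] {a b : ℕ} (h : b.Coprime a)
    [NeZero a] (f : ℕ → M) : ∑ i ∈ range a, f (i * b % a) = ∑ i ∈ range a, f i := by
  have := Equiv.sum_comp (Units.mulRight (ZMod.unitOfCoprime b h)) (fun x : ZMod a => f x.val)
  simp only [sum_range_eq_sum_zmod a]
  simpa [ZMod.val_mul, ZMod.val_natCast, Nat.mul_mod_mod] using this

lemma natCast_div_mul (u n : ℕ) : ((u / n : ℕ) : ℝ) * n = u - (u % n : ℕ) := by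
  rw [eq_sub_iff_add_eq]
  exact_mod_cast Nat.div_add_mod' u n

lemma card_filter_mul_le {a b m : ℕ} (ha : 0 < a) (hm : m / a < b) :
    #{j ∈ Ico 1 b | j * a ≤ m} = m / a := by
  have : {j ∈ Ico 1 b | j * a ≤ m} = Ico 1 (m / a + 1) := by
    ext j
    simp only [mem_filter, mem_Ico, ← Nat.le_div_iff_mul_le ha]
    omega
  rw [this, Nat.card_Ico, Nat.add_sub_cancel]

lemma mul_ne_mul_of_coprime {a b i : ℕ} (hab : a.Coprime b) (hi : i ∈ Ico 1 a) (j : ℕ) :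
    j * a ≠ i * b := by
  intro h
  have := Nat.le_of_dvd (mem_Ico.1 hi).1 (hab.dvd_of_dvd_mul_right ⟨j, by rw [← h, mul_comm]⟩)
  exact (mem_Ico.1 hi).2.not_ge this

lemma div_ne_div_of_coprime {a b i : ℕ} (hab : a.Coprime b) (hb : 0 < b) (hi : i ∈ Ico 1 a)
    (j : ℕ) : (j : ℚ) / b ≠ i / a := by
  have ha : 0 < a := (Nat.zero_le i).trans_lt (mem_Ico.1 hi).2
  rw [Ne, div_eq_div_iff (by positivity) (by positivity)]
  exact_mod_cast mul_ne_mul_of_coprime hab hi j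

lemma card_filter_div_lt_div {a b i : ℕ} (hab : a.Coprime b) (hb : 0 < b) (hi : i ∈ Ico 1 a) :
    #{j ∈ Ico 1 b | ((j : ℕ) : ℚ) / b < i / a} = i * b / a := by
  have ha : 0 < a := (Nat.zero_le i).trans_lt (mem_Ico.1 hi).2
  have hib : i * b < a * b := Nat.mul_lt_mul_of_pos_right (mem_Ico.1 hi).2 hb
  rw [← card_filter_mul_le (b := b) ha (Nat.div_lt_of_lt_mul hib)]
  refine congrArg card (filter_congr fun j _ => ?_)
  rw [← (div_ne_div_of_coprime hab hb hi j).le_iff_lt,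
    div_le_div_iff₀ (by positivity) (by positivity)]
  exact_mod_cast Iff.rfl

lemma ite_add_ite_add_ite_eq_one {α : Type*} [LinearOrder α] {x y z : α} (hxy : x ≠ y)
    (hxz : x ≠ z) (hyz : y ≠ z) :
    ((if y < x ∧ z < x then 1 else 0) + (if x < y ∧ z < y then 1 else 0)
      + (if y < z ∧ x < z then 1 else 0) : ℕ) = 1 := by
  split_ifs <;> grind

def floorProdSum (a b c : ℕ) : ℕ := ∑ i ∈ Ico 1 a, (i * b / a) * (i * c / a)

def weightedFloorSum (a b : ℕ) : ℕ := ∑ i ∈ Ico 1 a, i * (i * b / a)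

lemma floorProdSum_eq_sum_ite {a b c : ℕ} (hab : a.Coprime b) (hac : a.Coprime c)
    (hb : 0 < b) (hc : 0 < c) :
    floorProdSum a b c = ∑ i ∈ Ico 1 a, ∑ j ∈ Ico 1 b, ∑ k ∈ Ico 1 c,
      if (j : ℚ) / b < i / a ∧ (k : ℚ) / c < i / a then 1 else 0 := by
  refine sum_congr rfl fun i hi => ?_
  rw [← card_filter_div_lt_div hab hb hi, ← card_filter_div_lt_div hac hc hi, card_filter,
    card_filter, sum_mul_sum]
  simp only [ite_zero_mul_ite_zero, mul_one]

lemma floorProdSum_add_add {a b c : ℕ} (ha : 0 < a) (hb : 0 < b) (hc : 0 < c)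
    (hab : a.Coprime b) (hac : a.Coprime c) (hbc : b.Coprime c) :
    floorProdSum a b c + floorProdSum b a c + floorProdSum c b a
      = (a - 1) * (b - 1) * (c - 1) := by
  have h₂ : floorProdSum b a c = ∑ i ∈ Ico 1 a, ∑ j ∈ Ico 1 b, ∑ k ∈ Ico 1 c,
      if (i : ℚ) / a < j / b ∧ (k : ℚ) / c < j / b then 1 else 0 := by
    rw [floorProdSum_eq_sum_ite hab.symm hbc ha hc, sum_comm]
  have h₃ : floorProdSum c b a = ∑ i ∈ Ico 1 a, ∑ j ∈ Ico 1 b, ∑ k ∈ Ico 1 c,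
      if (j : ℚ) / b < k / c ∧ (i : ℚ) / a < k / c then 1 else 0 := by
    rw [floorProdSum_eq_sum_ite hbc.symm hac.symm hb ha, sum_comm_cycle (s := Ico 1 a)]
    exact sum_congr rfl fun k _ => sum_comm
  rw [floorProdSum_eq_sum_ite hab hac hb hc, h₂, h₃]
  simp only [← sum_add_distrib]
  rw [sum_congr rfl fun i hi => sum_congr rfl fun j hj => sum_congr rfl fun k _ =>
    ite_add_ite_add_ite_eq_one (div_ne_div_of_coprime hab hb hi j).symm
      (div_ne_div_of_coprime hac hc hi k).symm (div_ne_div_of_coprime hbc hc hj k).symm]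
  simp [mul_assoc]

lemma mul_weightedFloorSum_eq_sum_ite {a b : ℕ} (hb : 0 < b) :
    b * weightedFloorSum a b
      = ∑ i ∈ Ico 1 a, ∑ j ∈ Ico 1 b, if j * a ≤ i * b then i * b else 0 := by
  rw [weightedFloorSum, mul_sum]
  refine sum_congr rfl fun i hi => ?_
  have hia := (mem_Ico.1 hi).2
  have hib : i * b < a * b := Nat.mul_lt_mul_of_pos_right hia hb
  rw [← sum_filter, sum_const, card_filter_mul_le (by omega) (Nat.div_lt_of_lt_mul hib),
    smul_eq_mul]
  ring

lemma mul_weightedFloorSum_add_mul_weightedFloorSum {a b : ℕ} (ha : 0 < a) (hb : 0 < b)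
    (hab : a.Coprime b) :
    b * weightedFloorSum a b + a * weightedFloorSum b a
      = ∑ i ∈ Ico 1 a, ∑ j ∈ Ico 1 b, max (i * b) (j * a) := by
  rw [mul_weightedFloorSum_eq_sum_ite hb, mul_weightedFloorSum_eq_sum_ite ha,
    sum_comm (s := Ico 1 b), ← sum_add_distrib]
  refine sum_congr rfl fun i hi => ?_
  rw [← sum_add_distrib]
  refine sum_congr rfl fun j _ => ?_
  have := mul_ne_mul_of_coprime hab hi j
  split_ifs <;> omega

lemma sum_max_add_sum_range_div_mul_div {a b : ℕ} (ha : 0 < a) (hb : 0 < b) :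
    ∑ i ∈ Ico 1 a, ∑ j ∈ Ico 1 b, max (i * b) (j * a) + ∑ u ∈ range (a * b), u / a * (u / b)
      = a * b * ((a - 1) * (b - 1)) := by
  have hcount : ∑ u ∈ range (a * b), u / a * (u / b)
      = ∑ i ∈ Ico 1 a, ∑ j ∈ Ico 1 b, #{u ∈ range (a * b) | i * b ≤ u ∧ j * a ≤ u} := by
    calc ∑ u ∈ range (a * b), u / a * (u / b)
        = ∑ u ∈ range (a * b), #{i ∈ Ico 1 a | i * b ≤ u} * #{j ∈ Ico 1 b | j * a ≤ u} := by
          refine sum_congr rfl fun u hu => ?_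
          have hu := mem_range.1 hu
          rw [card_filter_mul_le hb (Nat.div_lt_of_lt_mul (by linarith)),
            card_filter_mul_le ha (Nat.div_lt_of_lt_mul hu), mul_comm]
      _ = ∑ u ∈ range (a * b), ∑ i ∈ Ico 1 a, ∑ j ∈ Ico 1 b,
            if i * b ≤ u ∧ j * a ≤ u then 1 else 0 := by
          simp only [card_filter, sum_mul_sum, ite_zero_mul_ite_zero, mul_one]
      _ = _ := by rw [← sum_comm_cycle]; simp only [card_filter]
  have hpair : ∀ i ∈ Ico 1 a, ∀ j ∈ Ico 1 b,
      max (i * b) (j * a) + #{u ∈ range (a * b) | i * b ≤ u ∧ j * a ≤ u} = a * b := by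
    intro i hi j hj
    have hi' : i * b ≤ a * b := Nat.mul_le_mul_right b (mem_Ico.1 hi).2.le
    have hj' : j * a ≤ a * b := by
      rw [mul_comm a]
      exact Nat.mul_le_mul_right a (mem_Ico.1 hj).2.le
    have : {u ∈ range (a * b) | i * b ≤ u ∧ j * a ≤ u} = Ico (max (i * b) (j * a)) (a * b) := by
      ext u
      simp only [mem_filter, mem_range, mem_Ico, max_le_iff]
      tauto
    rw [this, Nat.card_Ico]
    omega
  rw [hcount, ← sum_add_distrib,
    sum_congr rfl fun i hi => sum_add_distrib.symm.trans (sum_congr rfl (hpair i hi))]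
  simp only [sum_const, Nat.card_Ico, smul_eq_mul]
  ring

lemma sum_range_mul_natCast_mul_mod (a b : ℕ) :
    ∑ u ∈ range (b * a), (u : ℝ) * (u % a : ℕ)
      = a ^ 2 * (a - 1) * b * (b - 1) / 4 + b * (a * (a - 1) * (2 * a - 1) / 6) := by
  rw [sum_range_mul_eq_sum_sum]
  have h (q : ℕ) : ∀ r ∈ range a,
      ((r + a * q : ℕ) : ℝ) * ((r + a * q) % a : ℕ) = r ^ 2 + a * q * r := by
    intro r hr
    rw [Nat.add_mul_mod_self_left, Nat.mod_eq_of_lt (mem_range.1 hr)]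
    push_cast
    ring
  simp only [fun q => sum_congr rfl (h q), sum_add_distrib, ← mul_sum, ← sum_mul, sum_const,
    card_range, nsmul_eq_mul, sum_range_natCast, sum_range_natCast_sq]
  ring

lemma sum_range_div_mul_div {a b : ℕ} (hab : a.Coprime b) (ha : 0 < a) (hb : 0 < b) :
    12 * ∑ u ∈ range (a * b), ((u / a : ℕ) : ℝ) * (u / b : ℕ)
      = (a - 1) * (b - 1) * (4 * a * b + a + b + 1) := by
  have := NeZero.of_pos ha
  have := NeZero.of_pos hb
  have hterm (u : ℕ) : ((u / a : ℕ) : ℝ) * (u / b : ℕ) * (a * b)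
      = u ^ 2 - u * (u % a : ℕ) - u * (u % b : ℕ) + (u % a : ℕ) * (u % b : ℕ) := by
    linear_combination (natCast_div_mul u b) * (u / a : ℕ) * a
      + (u - (u % b : ℕ)) * natCast_div_mul u a
  have hcrt : ∑ u ∈ range (a * b), ((u % a : ℕ) : ℝ) * (u % b : ℕ)
      = a * (a - 1) / 2 * (b * (b - 1) / 2) := by
    rw [sum_range_mul_mod_mod hab (fun r s => (r : ℝ) * s), ← sum_mul_sum, sum_range_natCast,
      sum_range_natCast]
  apply mul_right_cancel₀ (show (a * b : ℝ) ≠ 0 by positivity)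
  rw [mul_assoc, sum_mul, sum_congr rfl fun u _ => hterm u, sum_add_distrib, sum_sub_distrib,
    sum_sub_distrib, hcrt, sum_range_mul_natCast_mul_mod b a, mul_comm a b,
    sum_range_mul_natCast_mul_mod a b, sum_range_natCast_sq]
  push_cast
  ring

lemma weightedFloorSum_reciprocity {a b : ℕ} (ha : 0 < a) (hb : 0 < b) (hab : a.Coprime b) :
    12 * ((b : ℝ) * weightedFloorSum a b + a * weightedFloorSum b a)
      = (a - 1) * (b - 1) * (8 * a * b - a - b - 1) := by
  have h := sum_max_add_sum_range_div_mul_div ha hb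
  rw [← mul_weightedFloorSum_add_mul_weightedFloorSum ha hb hab] at h
  have hR := congrArg (Nat.cast : ℕ → ℝ) h
  push_cast [Nat.cast_pred ha, Nat.cast_pred hb] at hR
  linear_combination 12 * hR - sum_range_div_mul_div hab ha hb

lemma b1_natCast_div (m n : ℕ) : b1 ((m : ℝ) / n) = (m % n : ℕ) / n - 1 / 2 := by
  rw [b1, Int.fract_div_natCast_eq_div_natCast_mod]

lemma dedekindS_eq_sum_mod_mul_mod {a b c : ℕ} (ha : 0 < a) (hb : b.Coprime a)
    (hc : c.Coprime a) :
    dedekindS b c a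
      = (∑ i ∈ Ico 1 a, ((i * b % a : ℕ) : ℝ) * (i * c % a : ℕ)) / a ^ 2 - (a - 1) / 4 := by
  have := NeZero.of_pos ha
  have hsum (d : ℕ) (hd : d.Coprime a) :
      ∑ i ∈ Ico 1 a, ((i * d % a : ℕ) : ℝ) = a * (a - 1) / 2 := by
    rw [sum_Ico_one_eq_sum_range (by simp), sum_range_comp_mul_mod hd (fun n => (n : ℝ)),
      sum_range_natCast]
  have hterm (i : ℕ) : b1 (i * b / a) * b1 (i * c / a)
      = ((i * b % a : ℕ) : ℝ) * (i * c % a : ℕ) / a ^ 2 - ((i * b % a : ℕ) : ℝ) / (2 * a)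
        - ((i * c % a : ℕ) : ℝ) / (2 * a) + 1 / 4 := by
    rw [← Nat.cast_mul, ← Nat.cast_mul, b1_natCast_div, b1_natCast_div]
    field_simp
    ring
  rw [dedekindS, sum_congr rfl fun i _ => hterm i, sum_add_distrib, sum_sub_distrib,
    sum_sub_distrib, ← sum_div, ← sum_div, ← sum_div, hsum b hb, hsum c hc, sum_const,
    Nat.card_Ico, nsmul_eq_mul, Nat.cast_pred ha]
  field_simp
  ring

lemma sum_mod_mul_mod_eq (a b c : ℕ) :
    ∑ i ∈ Ico 1 a, ((i * b % a : ℕ) : ℝ) * (i * c % a : ℕ)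
      = b * c * ∑ i ∈ Ico 1 a, (i : ℝ) ^ 2 + a ^ 2 * floorProdSum a b c
        - a * b * weightedFloorSum a c - a * c * weightedFloorSum a b := by
  simp only [floorProdSum, weightedFloorSum, Nat.cast_sum, Nat.cast_mul, mul_sum,
    ← sum_add_distrib, ← sum_sub_distrib]
  refine sum_congr rfl fun i _ => ?_
  have eb := natCast_div_mul (i * b) a
  have ec := natCast_div_mul (i * c) a
  push_cast at eb ec
  linear_combination ((i * c % a : ℕ) : ℝ) * eb + (i * b - (i * b / a : ℕ) * a) * ec

lemma sq_mul_dedekindS {a b c : ℕ} (ha : 0 < a) (hb : b.Coprime a) (hc : c.Coprime a) :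
    (a : ℝ) ^ 2 * dedekindS b c a
      = b * c * (a * (a - 1) * (2 * a - 1) / 6) + a ^ 2 * floorProdSum a b c
        - a * b * weightedFloorSum a c - a * c * weightedFloorSum a b - a ^ 2 * (a - 1) / 4 := by
  rw [dedekindS_eq_sum_mod_mul_mod ha hb hc, sum_mod_mul_mod_eq,
    sum_Ico_one_eq_sum_range (by simp), sum_range_natCast_sq]
  field_simp

theorem dedekind_rademacher_reciprocity (ν₀ ν₁ ν₂ : ℕ)
    (h₀ : 0 < ν₀) (h₁ : 0 < ν₁) (h₂ : 0 < ν₂)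
    (h01 : Nat.Coprime ν₀ ν₁) (h02 : Nat.Coprime ν₀ ν₂) (h12 : Nat.Coprime ν₁ ν₂) :
    dedekindS ν₁ ν₂ ν₀ + dedekindS ν₀ ν₂ ν₁ + dedekindS ν₁ ν₀ ν₂
      = ((ν₀:ℝ)^2 + (ν₁:ℝ)^2 + (ν₂:ℝ)^2) / (12 * ν₀ * ν₁ * ν₂) - 1/4 := by
  have e₀ := sq_mul_dedekindS h₀ h01.symm h02.symm
  have e₁ := sq_mul_dedekindS h₁ h01 h12.symm
  have e₂ := sq_mul_dedekindS h₂ h12 h02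
  have r₀₁ := weightedFloorSum_reciprocity h₀ h₁ h01
  have r₀₂ := weightedFloorSum_reciprocity h₀ h₂ h02
  have r₁₂ := weightedFloorSum_reciprocity h₁ h₂ h12
  have t := congrArg (Nat.cast : ℕ → ℝ) (floorProdSum_add_add h₀ h₁ h₂ h01 h02 h12)
  push_cast [Nat.cast_pred h₀, Nat.cast_pred h₁, Nat.cast_pred h₂] at t
  rw [eq_sub_iff_add_eq, eq_div_iff (by positivity)]
  apply mul_left_cancel₀ (show (ν₀ * ν₁ * ν₂ : ℝ) ≠ 0 by positivity)
  linear_combination 12 * ν₁ ^ 2 * ν₂ ^ 2 * e₀ + 12 * ν₀ ^ 2 * ν₂ ^ 2 * e₁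
    + 12 * ν₀ ^ 2 * ν₁ ^ 2 * e₂ - ν₀ * ν₁ * ν₂ ^ 3 * r₀₁ - ν₀ * ν₁ ^ 3 * ν₂ * r₀₂
    - ν₀ ^ 3 * ν₁ * ν₂ * r₁₂ + 12 * ν₀ ^ 2 * ν₁ ^ 2 * ν₂ ^ 2 * t
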